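/- arXiv:2001.10168 — 2 statements merged into one kernel-verified Lean document; each statement's English description precedes it below -/
import Mathlib

section
/- Let τ ∈ (0,1), ε₁,…,ε_N ∈ ℝ, and x₁,…,x_N ∈ ℝ^p. Define V_π = ∑_{i=1}^N (τ − I(ε_i<0))² x_i x_iᵀ / (N² π_i) for a positive probability vector π. Then tr(V_π) ≥ N^{-2}(∑_{i=1}^N |τ − I(ε_i<0)|·‖x_i‖)², and equality holds for π_i = |τ − I(ε_i<0)|·‖x_i‖ / ∑_j |τ − I(ε_j<0)|·‖x_j‖ (assuming the denominator is positive). -/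
open Finset Matrix

theorem L_optimality (N p : ℕ) (τ : ℝ) (hτ : τ ∈ Set.Ioo (0:ℝ) 1)
    (ε : Fin N → ℝ) (x : Fin N → Fin p → ℝ)
    (nrm : Fin N → ℝ)
    (hnrm : ∀ i, nrm i = ‖(WithLp.equiv 2 (Fin p → ℝ)).symm (x i)‖)
    (a : Fin N → ℝ)
    (ha : ∀ i, a i = τ - (if ε i < 0 then (1:ℝ) else 0))
    (V : (Fin N → ℝ) → Matrix (Fin p) (Fin p) ℝ)
    (hV : ∀ π, V π = ∑ i, ((a i) ^ 2 / ((N:ℝ) ^ 2 * π i)) •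
        Matrix.of (fun j k => x i j * x i k)) :
    (∀ π : Fin N → ℝ, (∀ i, 0 < π i) → (∑ i, π i = 1) →
        ((N:ℝ))⁻¹ ^ 2 * (∑ i, |a i| * nrm i) ^ 2 ≤ (V π).trace) ∧
    ((0 < ∑ j, |a j| * nrm j) →
      (V (fun i => |a i| * nrm i / ∑ j, |a j| * nrm j)).trace =
        ((N:ℝ))⁻¹ ^ 2 * (∑ i, |a i| * nrm i) ^ 2) := by
  have hnn : ∀ i, 0 ≤ nrm i := fun i => (hnrm i) ▸ norm_nonneg _
  have hsq : ∀ i, nrm i ^ 2 = ∑ j, x i j ^ 2 := by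
    intro i
    rw [hnrm i, EuclideanSpace.norm_eq, Real.sq_sqrt (by positivity)]
    simp [sq_abs]
  have ht2 : ∀ i, a i ^ 2 * nrm i ^ 2 = (|a i| * nrm i) ^ 2 := by
    intro i; rw [mul_pow, sq_abs]
  have htr : ∀ π, (V π).trace = ((N:ℝ) ^ 2)⁻¹ *
      ∑ i, (|a i| * nrm i) ^ 2 / π i := by
    intro π
    rw [hV, Matrix.trace_sum, Finset.mul_sum]
    refine Finset.sum_congr rfl fun i _ => ?_
    rw [Matrix.trace_smul]
    have : (Matrix.of (fun j k => x i j * x i k)).trace = nrm i ^ 2 := by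
      rw [hsq]
      simp [Matrix.trace, Matrix.diag, sq]
    rw [this, smul_eq_mul, ← ht2]
    field_simp
  constructor
  · intro π hpos hsum
    have key : (∑ i, |a i| * nrm i) ^ 2 ≤ ∑ i, (|a i| * nrm i) ^ 2 / π i := by
      have CS := Finset.sum_mul_sq_le_sq_mul_sq Finset.univ
        (fun i => Real.sqrt (π i)) (fun i => |a i| * nrm i / Real.sqrt (π i))
      have h1 : ∀ i, Real.sqrt (π i) * (|a i| * nrm i / Real.sqrt (π i))
          = |a i| * nrm i := by
        intro i
        rw [mul_comm, div_mul_cancel₀ _ (ne_of_gt (Real.sqrt_pos.2 (hpos i)))]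
      have h2 : ∀ i, Real.sqrt (π i) ^ 2 = π i := fun i =>
        Real.sq_sqrt (hpos i).le
      have h3 : ∀ i, (|a i| * nrm i / Real.sqrt (π i)) ^ 2
          = (|a i| * nrm i) ^ 2 / π i := by
        intro i; rw [div_pow, h2]
      calc (∑ i, |a i| * nrm i) ^ 2
          = (∑ i, Real.sqrt (π i) * (|a i| * nrm i / Real.sqrt (π i))) ^ 2 := by
            simp_rw [h1]
        _ ≤ (∑ i, Real.sqrt (π i) ^ 2) *
              ∑ i, (|a i| * nrm i / Real.sqrt (π i)) ^ 2 := CS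
        _ = ∑ i, (|a i| * nrm i) ^ 2 / π i := by
            simp_rw [h2, h3, hsum, one_mul]
    rw [htr, inv_pow]
    exact mul_le_mul_of_nonneg_left key (by positivity)
  · intro hS
    set S := ∑ j, |a j| * nrm j with hSdef
    rw [htr]
    have : ∀ i, (|a i| * nrm i) ^ 2 / (|a i| * nrm i / S)
        = (|a i| * nrm i) * S := by
      intro i
      rcases eq_or_ne (|a i| * nrm i) 0 with h | h
      · simp [h]
      · field_simp
    rw [Finset.sum_congr rfl fun i _ => this i, ← Finset.sum_mul]
    rw [inv_pow]
    ring
end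

section
/- Let τ ∈ (0,1), ε₁,…,ε_N ∈ ℝ, x₁,…,x_N ∈ ℝ^p, and let D be a p×p invertible matrix. Define V_π = ∑_{i=1}^N (τ − I(ε_i<0))² x_i x_iᵀ / (N² π_i). Then tr(D^{-1} V_π D^{-1}) ≥ N^{-2}(∑_{i=1}^N |τ − I(ε_i<0)|·‖D^{-1}x_i‖)² for any positive probability vector π, with equality when π_i ∝ |τ − I(ε_i<0)|·‖D^{-1}x_i‖. -/
/-! With `b i = |a i| * ‖D⁻¹ x i‖`, symmetry of `D⁻¹` turns the trace into
`N⁻² ∑ b i ^ 2 / π i`. The lower bound is then Sedrakyan's form of Cauchy–Schwarz with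
`∑ π i = 1`, and for `π i = b i / ∑ b` every term `b i ^ 2 / π i` equals `(∑ b) * b i`. -/

open Finset Matrix

theorem Matrix.trace_mul_vecMulVec_mul_transpose {R m n : Type*} [CommSemiring R] [Fintype m]
    [Fintype n] (M : Matrix m n R) (v : n → R) :
    (M * vecMulVec v v * Mᵀ).trace = (M *ᵥ v) ⬝ᵥ (M *ᵥ v) := by
  rw [mul_vecMulVec, vecMulVec_mul, vecMul_transpose, trace_vecMulVec]

theorem Matrix.trace_mul_sum_smul_vecMulVec_mul_transpose {R ι m n : Type*} [CommSemiring R]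
    [Fintype m] [Fintype n] (s : Finset ι) (w : ι → R) (x : ι → n → R) (M : Matrix m n R) :
    (M * (∑ i ∈ s, w i • vecMulVec (x i) (x i)) * Mᵀ).trace =
      ∑ i ∈ s, w i * (M *ᵥ x i) ⬝ᵥ (M *ᵥ x i) := by
  simp only [Matrix.mul_sum, Matrix.sum_mul, trace_sum, Matrix.mul_smul, Matrix.smul_mul,
    trace_smul, trace_mul_vecMulVec_mul_transpose, smul_eq_mul]

-- Holds also where `f i = 0` or `c = 0`, both sides of the term then being `0` since `x / 0 = 0`.
theorem Finset.sum_sq_div_div_eq_mul_sum {ι K : Type*} [Field K] (s : Finset ι) (f : ι → K)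
    (c : K) : ∑ i ∈ s, f i ^ 2 / (f i / c) = c * ∑ i ∈ s, f i := by
  rw [Finset.mul_sum]
  refine Finset.sum_congr rfl fun i _ => ?_
  rcases eq_or_ne (f i) 0 with hf | hf
  · simp [hf]
  · rw [div_div_eq_mul_div, sq, mul_assoc, mul_div_cancel_left₀ _ hf, mul_comm]

theorem A_optimality_general (N p : ℕ)
    (x : Fin N → Fin p → ℝ)
    (D : Matrix (Fin p) (Fin p) ℝ) (hD : D.PosDef)
    (nrmD : Fin N → ℝ)
    (hnrmD : ∀ i, nrmD i = ‖(WithLp.equiv 2 (Fin p → ℝ)).symm (D⁻¹ *ᵥ x i)‖)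
    (a : Fin N → ℝ)
    (V : (Fin N → ℝ) → Matrix (Fin p) (Fin p) ℝ)
    (hV : ∀ π, V π = ∑ i, ((a i) ^ 2 / ((N:ℝ) ^ 2 * π i)) •
        Matrix.of (fun j k => x i j * x i k)) :
    (∀ π : Fin N → ℝ, (∀ i, 0 < π i) → (∑ i, π i = 1) →
        ((N:ℝ))⁻¹ ^ 2 * (∑ i, |a i| * nrmD i) ^ 2 ≤ (D⁻¹ * V π * D⁻¹).trace) ∧
    ((0 < ∑ j, |a j| * nrmD j) →
      (D⁻¹ * V (fun i => |a i| * nrmD i / ∑ j, |a j| * nrmD j) * D⁻¹).trace =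
        ((N:ℝ))⁻¹ ^ 2 * (∑ i, |a i| * nrmD i) ^ 2) := by
  have hsymm : (D⁻¹)ᵀ = D⁻¹ := by
    simpa [conjTranspose_eq_transpose_of_trivial] using hD.isHermitian.inv.eq
  have hnrm : ∀ i, (D⁻¹ *ᵥ x i) ⬝ᵥ (D⁻¹ *ᵥ x i) = nrmD i ^ 2 := fun i => by
    rw [hnrmD, EuclideanSpace.real_norm_sq_eq]
    simp [dotProduct, sq]
  have htrace : ∀ π, (D⁻¹ * V π * D⁻¹).trace = (N:ℝ)⁻¹ ^ 2 * ∑ i, (|a i| * nrmD i) ^ 2 / π i :=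
    fun π => by
      have h := trace_mul_sum_smul_vecMulVec_mul_transpose univ
        (fun i => a i ^ 2 / ((N:ℝ) ^ 2 * π i)) x D⁻¹
      rw [hsymm] at h
      rw [hV π]
      refine h.trans ?_
      rw [mul_sum]
      refine sum_congr rfl fun i _ => ?_
      rw [hnrm, mul_pow, sq_abs]
      ring
  refine ⟨fun π hπ hπ1 => ?_, fun _ => ?_⟩
  · rw [htrace]
    gcongr
    simpa [hπ1] using sq_sum_div_le_sum_sq_div univ (fun i => |a i| * nrmD i) fun i _ => hπ i
  · rw [htrace, sum_sq_div_div_eq_mul_sum]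
    ring

theorem A_optimality (N p : ℕ) (τ : ℝ) (hτ : τ ∈ Set.Ioo (0:ℝ) 1)
    (ε : Fin N → ℝ) (x : Fin N → Fin p → ℝ)
    (D : Matrix (Fin p) (Fin p) ℝ) (hD : D.PosDef)
    (nrmD : Fin N → ℝ)
    (hnrmD : ∀ i, nrmD i = ‖(WithLp.equiv 2 (Fin p → ℝ)).symm (D⁻¹ *ᵥ x i)‖)
    (a : Fin N → ℝ)
    (ha : ∀ i, a i = τ - (if ε i < 0 then (1:ℝ) else 0))
    (V : (Fin N → ℝ) → Matrix (Fin p) (Fin p) ℝ)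
    (hV : ∀ π, V π = ∑ i, ((a i) ^ 2 / ((N:ℝ) ^ 2 * π i)) •
        Matrix.of (fun j k => x i j * x i k)) :
    (∀ π : Fin N → ℝ, (∀ i, 0 < π i) → (∑ i, π i = 1) →
        ((N:ℝ))⁻¹ ^ 2 * (∑ i, |a i| * nrmD i) ^ 2 ≤ (D⁻¹ * V π * D⁻¹).trace) ∧
    ((0 < ∑ j, |a j| * nrmD j) →
      (D⁻¹ * V (fun i => |a i| * nrmD i / ∑ j, |a j| * nrmD j) * D⁻¹).trace =
        ((N:ℝ))⁻¹ ^ 2 * (∑ i, |a i| * nrmD i) ^ 2) :=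
  A_optimality_general N p x D hD nrmD hnrmD a V hV
end
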